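/- Z is locally injective off its branch set: for every x = (x₁,x₂,x₃) ∈ ℝ³ such that x₁ and x₂ are not both odd integers, there is an open neighbourhood U of x such that the restriction of Z to U is injective. -/

import Mathlib

/-!
Since `max |Z₁| |Z₂| + |Z₃| = exp x₃`, a value of `Z` determines `x₃`, and then `h x₁`, `h x₂`
and `ε x₁ ε x₂ (1 - max |h x₁| |h x₂|)`. On each interval `|t - 2k| < 1` the sawtooth is
`h t = ±(t - 2k)`, so off both odd lines `h x₁, h x₂` recover `x₁, x₂`. Near a point with
`x₁ = 2n + 1` and `|x₂ - 2m| < 1`, on the region `|x₁ - (2n+1)| + |x₂ - 2m| < 1` the maximum is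
`|h x₁|` and the third coordinate is `±(2n + 1 - x₁)`, which recovers `x₁`, while `h x₂` recovers
`x₂`. The case `x₂` odd follows from the symmetry of `Z` under swapping `x₁` and `x₂`.
-/

/-- Explicit vector in ℝ³ (with the Euclidean norm). -/
def vec3 (a b c : ℝ) : EuclideanSpace ℝ (Fin 3) := WithLp.toLp 2 ![a, b, c]

/-- The 4-periodic sawtooth: h(t) = t on [-1,1], h(t) = 2 - t on [1,3]. -/
noncomputable def h (t : ℝ) : ℝ := 1 - |4 * Int.fract ((t + 1) / 4) - 2|

/-- The sign function ε(t) = (-1)^⌊(t+1)/2⌋. -/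
noncomputable def eps (t : ℝ) : ℝ := (-1 : ℝ) ^ ⌊(t + 1) / 2⌋

/-- The Zorich-type map Z : ℝ³ → ℝ³. -/
noncomputable def Z (x : EuclideanSpace ℝ (Fin 3)) : EuclideanSpace ℝ (Fin 3) :=
  Real.exp (x 2) •
    vec3 (h (x 0)) (h (x 1)) (eps (x 0) * eps (x 1) * (1 - max |h (x 0)| |h (x 1)|))

/-- Rotation by π about the vertical line {(u,v,t) : t ∈ ℝ}. -/
noncomputable def Rot (u v : ℝ) (x : EuclideanSpace ℝ (Fin 3)) : EuclideanSpace ℝ (Fin 3) :=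
  vec3 (2 * u - x 0) (2 * v - x 1) (x 2)

open Set

lemma abs_eps (t : ℝ) : |eps t| = 1 := abs_neg_one_zpow _

lemma abs_h_le_one (t : ℝ) : |h t| ≤ 1 := by
  have h0 := Int.fract_nonneg ((t + 1) / 4)
  have h1 := Int.fract_lt_one ((t + 1) / 4)
  rw [h, abs_le]
  constructor <;> cases abs_cases (4 * Int.fract ((t + 1) / 4) - 2) <;> linarith

lemma exists_abs_sub_two_mul_lt_one {t : ℝ} (ht : ¬∃ m : ℤ, t = 2 * m + 1) :
    ∃ m : ℤ, |t - 2 * m| < 1 := by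
  have hle : |t - 2 * round (t / 2)| ≤ 1 := by
    have := abs_sub_round (t / 2)
    rw [show t - 2 * (round (t / 2) : ℝ) = 2 * (t / 2 - round (t / 2)) by ring, abs_mul,
      abs_two]
    linarith
  refine ⟨round (t / 2), hle.lt_of_ne fun h1 => ht ?_⟩
  rcases eq_or_eq_neg_of_abs_eq h1 with h2 | h2
  · exact ⟨round (t / 2), by linarith⟩
  · exact ⟨round (t / 2) - 1, by push_cast; linarith⟩

section Ico

variable {k : ℤ} {t : ℝ}

lemma eps_eq_of_mem_Ico (ht : t ∈ Ico (2 * k - 1 : ℝ) (2 * k + 1)) : eps t = (-1) ^ k := by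
  have : ⌊(t + 1) / 2⌋ = k := by
    rw [Int.floor_eq_iff]
    constructor <;> linarith [ht.1, ht.2]
  rw [eps, this]

lemma h_eq_of_mem_Ico (ht : t ∈ Ico (2 * k - 1 : ℝ) (2 * k + 1)) :
    h t = (-1) ^ k * (t - 2 * k) := by
  obtain ⟨ht1, ht2⟩ := ht
  obtain ⟨q, rfl | rfl⟩ := Int.even_or_odd' k <;> push_cast at ht1 ht2 ⊢
  · have hq : ⌊(t + 1) / 4⌋ = q := Int.floor_eq_iff.2 ⟨by linarith, by linarith⟩
    rw [h, ← Int.self_sub_floor, hq, (even_two_mul q).neg_one_zpow,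
      abs_of_nonpos (by linarith)]
    ring
  · have hq : ⌊(t + 1) / 4⌋ = q := Int.floor_eq_iff.2 ⟨by linarith, by linarith⟩
    rw [h, ← Int.self_sub_floor, hq, (odd_two_mul_add_one q).neg_one_zpow,
      abs_of_nonneg (by linarith)]
    ring

lemma abs_h_eq_of_mem_Ico (ht : t ∈ Ico (2 * k - 1 : ℝ) (2 * k + 1)) : |h t| = |t - 2 * k| := by
  rw [h_eq_of_mem_Ico ht, abs_mul, abs_neg_one_zpow, one_mul]

end Ico

lemma h_injOn (k : ℤ) : InjOn h {t | |t - 2 * k| < 1} := by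
  rintro a (ha : |a - 2 * k| < 1) b (hb : |b - 2 * k| < 1) hab
  obtain ⟨ha1, ha2⟩ := abs_lt.1 ha
  obtain ⟨hb1, hb2⟩ := abs_lt.1 hb
  rw [h_eq_of_mem_Ico ⟨by linarith, by linarith⟩, h_eq_of_mem_Ico ⟨by linarith, by linarith⟩]
    at hab
  linarith [mul_left_cancel₀ (zpow_ne_zero k (by norm_num)) hab]

section NearOdd

variable {n : ℤ} {t : ℝ}

lemma abs_h_eq_of_abs_sub_odd_lt_one (ht : |t - (2 * n + 1)| < 1) :
    |h t| = 1 - |t - (2 * n + 1)| := by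
  obtain ⟨ht1, ht2⟩ := abs_lt.1 ht
  rcases lt_or_ge t (2 * n + 1) with hlt | hge
  · rw [abs_h_eq_of_mem_Ico (k := n) ⟨by linarith, hlt⟩, abs_of_pos (by linarith),
      abs_of_neg (by linarith)]
    ring
  · rw [abs_h_eq_of_mem_Ico (k := n + 1) ⟨by push_cast; linarith, by push_cast; linarith⟩,
      abs_of_neg (by push_cast; linarith), abs_of_nonneg (by linarith)]
    push_cast; ring

lemma eps_mul_one_sub_abs_h_of_abs_sub_odd_lt_one (ht : |t - (2 * n + 1)| < 1) :
    eps t * (1 - |h t|) = (-1) ^ n * (2 * n + 1 - t) := by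
  obtain ⟨ht1, ht2⟩ := abs_lt.1 ht
  rw [abs_h_eq_of_abs_sub_odd_lt_one ht]
  rcases lt_or_ge t (2 * n + 1) with hlt | hge
  · rw [eps_eq_of_mem_Ico (k := n) ⟨by linarith, hlt⟩, abs_of_neg (by linarith)]
    ring
  · rw [eps_eq_of_mem_Ico (k := n + 1) ⟨by push_cast; linarith, by push_cast; linarith⟩,
      zpow_add_one₀ (by norm_num), abs_of_nonneg (by linarith)]
    ring

end NearOdd

lemma euclideanSpace_fin_three_ext {a b : EuclideanSpace ℝ (Fin 3)} (h0 : a 0 = b 0)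
    (h1 : a 1 = b 1) (h2 : a 2 = b 2) : a = b := by
  ext i
  fin_cases i <;> assumption

section Z

variable (y : EuclideanSpace ℝ (Fin 3))

@[simp] lemma Z_apply_zero : Z y 0 = Real.exp (y 2) * h (y 0) := by simp [Z, vec3]

@[simp] lemma Z_apply_one : Z y 1 = Real.exp (y 2) * h (y 1) := by simp [Z, vec3]

@[simp] lemma Z_apply_two :
    Z y 2 = Real.exp (y 2) * (eps (y 0) * eps (y 1) * (1 - max |h (y 0)| |h (y 1)|)) := by
  simp [Z, vec3]

lemma max_abs_Z_add_abs_Z_two : max |Z y 0| |Z y 1| + |Z y 2| = Real.exp (y 2) := by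
  have hexp := Real.exp_pos (y 2)
  have hmax : max |h (y 0)| |h (y 1)| ≤ 1 := max_le (abs_h_le_one _) (abs_h_le_one _)
  simp only [Z_apply_zero, Z_apply_one, Z_apply_two, abs_mul, abs_eps, abs_of_pos hexp,
    ← mul_max_of_nonneg _ _ hexp.le, abs_of_nonneg (sub_nonneg.2 hmax)]
  ring

end Z

lemma coords_eq_of_Z_eq {a b : EuclideanSpace ℝ (Fin 3)} (hab : Z a = Z b) :
    a 2 = b 2 ∧ h (a 0) = h (b 0) ∧ h (a 1) = h (b 1) ∧
      eps (a 0) * eps (a 1) * (1 - max |h (a 0)| |h (a 1)|) =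
        eps (b 0) * eps (b 1) * (1 - max |h (b 0)| |h (b 1)|) := by
  have h2 : a 2 = b 2 := Real.exp_injective <| by
    rw [← max_abs_Z_add_abs_Z_two, ← max_abs_Z_add_abs_Z_two, hab]
  have hexp := Real.exp_ne_zero (b 2)
  refine ⟨h2, ?_, ?_, ?_⟩ <;> apply mul_left_cancel₀ hexp
  · simpa [h2] using congr_arg (· 0) hab
  · simpa [h2] using congr_arg (· 1) hab
  · simpa [h2] using congr_arg (· 2) hab

lemma Z_injOn_of_abs_sub_even_lt_one (k m : ℤ) :
    InjOn Z {y | |y 0 - 2 * k| < 1 ∧ |y 1 - 2 * m| < 1} := by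
  intro a ha b hb hab
  obtain ⟨h2, h0, h1, -⟩ := coords_eq_of_Z_eq hab
  exact euclideanSpace_fin_three_ext (h_injOn k ha.1 hb.1 h0) (h_injOn m ha.2 hb.2 h1) h2

section NearOddFst

variable {n m : ℤ} {y : EuclideanSpace ℝ (Fin 3)}

lemma abs_sub_even_lt_one_of_near_odd_fst (hy : |y 0 - (2 * n + 1)| + |y 1 - 2 * m| < 1) :
    |y 1 - 2 * m| < 1 := by
  linarith [abs_nonneg (y 0 - (2 * n + 1))]

lemma eps_mul_eps_mul_one_sub_max_of_near_odd_fst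
    (hy : |y 0 - (2 * n + 1)| + |y 1 - 2 * m| < 1) :
    eps (y 0) * eps (y 1) * (1 - max |h (y 0)| |h (y 1)|) =
      (-1) ^ m * ((-1) ^ n * (2 * n + 1 - y 0)) := by
  have h0 : |y 0 - (2 * n + 1)| < 1 := by linarith [abs_nonneg (y 1 - 2 * m)]
  have h1 := abs_sub_even_lt_one_of_near_odd_fst hy
  have hmem : y 1 ∈ Ico (2 * m - 1 : ℝ) (2 * m + 1) := by
    obtain ⟨h1l, h1r⟩ := abs_lt.1 h1
    exact ⟨by linarith, by linarith⟩
  have hmax : max |h (y 0)| |h (y 1)| = |h (y 0)| := by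
    rw [abs_h_eq_of_abs_sub_odd_lt_one h0, abs_h_eq_of_mem_Ico hmem]
    exact max_eq_left (by linarith)
  rw [hmax, eps_eq_of_mem_Ico hmem, ← eps_mul_one_sub_abs_h_of_abs_sub_odd_lt_one h0]
  ring

end NearOddFst

lemma Z_injOn_near_odd_fst (n m : ℤ) :
    InjOn Z {y | |y 0 - (2 * n + 1)| + |y 1 - 2 * m| < 1} := by
  intro a ha b hb hab
  obtain ⟨h2, -, h1, h3⟩ := coords_eq_of_Z_eq hab
  rw [eps_mul_eps_mul_one_sub_max_of_near_odd_fst ha,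
    eps_mul_eps_mul_one_sub_max_of_near_odd_fst hb] at h3
  have h0 := mul_left_cancel₀ (zpow_ne_zero n (by norm_num))
    (mul_left_cancel₀ (zpow_ne_zero m (by norm_num)) h3)
  exact euclideanSpace_fin_three_ext (by linarith) (h_injOn m
    (abs_sub_even_lt_one_of_near_odd_fst ha) (abs_sub_even_lt_one_of_near_odd_fst hb) h1) h2

lemma exists_isOpen_injOn_Z_of_odd_fst {x : EuclideanSpace ℝ (Fin 3)}
    (h0 : ∃ n : ℤ, x 0 = 2 * n + 1) (h1 : ¬∃ m : ℤ, x 1 = 2 * m + 1) :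
    ∃ U : Set (EuclideanSpace ℝ (Fin 3)), IsOpen U ∧ x ∈ U ∧ InjOn Z U := by
  obtain ⟨n, hn⟩ := h0
  obtain ⟨m, hm⟩ := exists_abs_sub_two_mul_lt_one h1
  refine ⟨_, isOpen_lt (by fun_prop) continuous_const, ?_, Z_injOn_near_odd_fst n m⟩
  simpa [hn] using hm

lemma exists_isOpen_injOn_Z_of_not_odd {x : EuclideanSpace ℝ (Fin 3)}
    (h0 : ¬∃ k : ℤ, x 0 = 2 * k + 1) (h1 : ¬∃ m : ℤ, x 1 = 2 * m + 1) :
    ∃ U : Set (EuclideanSpace ℝ (Fin 3)), IsOpen U ∧ x ∈ U ∧ InjOn Z U := by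
  obtain ⟨k, hk⟩ := exists_abs_sub_two_mul_lt_one h0
  obtain ⟨m, hm⟩ := exists_abs_sub_two_mul_lt_one h1
  refine ⟨{y | |y 0 - 2 * k| < 1 ∧ |y 1 - 2 * m| < 1}, ?_, ⟨hk, hm⟩,
    Z_injOn_of_abs_sub_even_lt_one k m⟩
  rw [ofPred_and]
  exact (isOpen_lt (by fun_prop) continuous_const).inter (isOpen_lt (by fun_prop) continuous_const)

noncomputable def swapXY : EuclideanSpace ℝ (Fin 3) ≃ₗᵢ[ℝ] EuclideanSpace ℝ (Fin 3) :=
  LinearIsometryEquiv.piLpCongrLeft 2 ℝ ℝ (Equiv.swap 0 1)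

@[simp] lemma swapXY_apply_zero (y : EuclideanSpace ℝ (Fin 3)) : swapXY y 0 = y 1 := by
  simp [swapXY]

@[simp] lemma swapXY_apply_one (y : EuclideanSpace ℝ (Fin 3)) : swapXY y 1 = y 0 := by
  simp [swapXY]

@[simp] lemma swapXY_apply_two (y : EuclideanSpace ℝ (Fin 3)) : swapXY y 2 = y 2 := by
  simp [swapXY, Equiv.swap_apply_of_ne_of_ne]

lemma Z_swapXY (y : EuclideanSpace ℝ (Fin 3)) : Z (swapXY y) = swapXY (Z y) := by
  apply euclideanSpace_fin_three_ext <;> simp [max_comm, mul_comm]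

lemma Z_injOn_preimage_swapXY {U : Set (EuclideanSpace ℝ (Fin 3))} (hU : InjOn Z U) :
    InjOn Z (swapXY ⁻¹' U) := by
  have hcomp : InjOn (Z ∘ swapXY) (swapXY ⁻¹' U) :=
    hU.comp swapXY.injective.injOn (mapsTo_preimage _ _)
  rw [show Z ∘ swapXY = swapXY ∘ Z from funext Z_swapXY] at hcomp
  exact hcomp.of_comp

/-- Z is locally injective off its branch set: if x₁ and x₂ are not both odd
    integers, then Z is injective on some open neighbourhood of x. -/
theorem zorich_locally_injective (x : EuclideanSpace ℝ (Fin 3))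
    (hx : ¬((∃ n : ℤ, x 0 = 2 * n + 1) ∧ (∃ m : ℤ, x 1 = 2 * m + 1))) :
    ∃ U : Set (EuclideanSpace ℝ (Fin 3)), IsOpen U ∧ x ∈ U ∧ Set.InjOn Z U := by
  by_cases h0 : ∃ n : ℤ, x 0 = 2 * n + 1
  · exact exists_isOpen_injOn_Z_of_odd_fst h0 fun h1 => hx ⟨h0, h1⟩
  by_cases h1 : ∃ n : ℤ, x 1 = 2 * n + 1
  · obtain ⟨U, hU, hxU, hinj⟩ :=
      exists_isOpen_injOn_Z_of_odd_fst (x := swapXY x) (by simpa using h1) (by simpa using h0)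
    exact ⟨swapXY ⁻¹' U, hU.preimage swapXY.continuous, hxU, Z_injOn_preimage_swapXY hinj⟩
  exact exists_isOpen_injOn_Z_of_not_odd h0 h1
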